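/- arXiv:2506.09592 — 2 statements merged into one kernel-verified Lean document; each statement's English description precedes it below -/
import Mathlib

section
/- Let ξ_1, ξ_2, … be i.i.d. standard Gaussian random vectors in ℝ², let S_j := ξ_1 + ⋯ + ξ_j and T_j := |S_j|²/2 (so that (T_j)_{j≥1} has the law of (½|B_j|²)_{j≥1} for a standard two-dimensional Brownian motion B evaluated at integer times). Then for every α > 1: lim_{k→∞} inf_{n≥k} P( T_j ≤ α·j·log j for all j = k, k+1, …, n ) = 1. -/
/-!
Chernoff bound in the plane: if `X, Y` are independent `N(0, v)`, then
`E exp (a (X² + Y²)) = (1 - 2 a v)⁻¹`, whence for `1 < β < α` the barrier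
`|S_j|² / 2 ≤ α j log j` is crossed at time `j` with probability at most `C j ^ (-β)`.
These bounds are summable, so the probability of a crossing at some time `j ≥ k` is bounded by
the tail of a convergent series, which tends to `0` uniformly in the horizon `n`.
-/

open MeasureTheory ProbabilityTheory Real Filter Topology
open scoped NNReal ENNReal

lemma lintegral_exp_mul_sq_gaussianReal (v : ℝ≥0) {a : ℝ} (h : 2 * a * v < 1) :
    ∫⁻ x, ENNReal.ofReal (rexp (a * x ^ 2)) ∂gaussianReal 0 v =
      ENNReal.ofReal (√(1 - 2 * a * v))⁻¹ := by
  rcases eq_or_ne v 0 with rfl | hv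
  · simp [gaussianReal_zero_var]
  have hv0 : (0 : ℝ) < v := by positivity
  have hb : 0 < 1 / (2 * v) - a := by
    rw [sub_pos, lt_div_iff₀ (by positivity)]; linarith
  have hpdf : ∀ x, gaussianPDFReal 0 v x * rexp (a * x ^ 2)
      = (√(2 * π * v))⁻¹ * rexp (-(1 / (2 * v) - a) * x ^ 2) := by
    intro x
    rw [gaussianPDFReal, mul_assoc, ← Real.exp_add]
    congr 2
    field_simp
    ring
  rw [gaussianReal_of_var_ne_zero 0 hv,
    lintegral_withDensity_eq_lintegral_mul _ (measurable_gaussianPDF 0 v) (by fun_prop)]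
  simp only [Pi.mul_apply, gaussianPDF, ← ENNReal.ofReal_mul (gaussianPDFReal_nonneg _ _ _), hpdf]
  rw [← ofReal_integral_eq_lintegral_ofReal ((integrable_exp_neg_mul_sq hb).const_mul _)
      (ae_of_all _ fun x => by positivity), integral_const_mul, integral_gaussian]
  congr 1
  have h1 : π / (1 / (2 * v) - a) = 2 * π * v / (1 - 2 * a * v) := by
    field_simp
  rw [h1, Real.sqrt_div' _ (by linarith), div_eq_mul_inv, ← mul_assoc,
    inv_mul_cancel₀ (by positivity), one_mul]

variable {Ω : Type*} [MeasurableSpace Ω] {P : Measure Ω}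

namespace ProbabilityTheory

lemma iIndepFun.map_sum_range_eq_gaussianReal [IsProbabilityMeasure P] {X : ℕ → Ω → ℝ}
    (hmeas : ∀ i, Measurable (X i)) (hindep : iIndepFun X P) {v : ℝ≥0}
    (hlaw : ∀ i, P.map (X i) = gaussianReal 0 v) (m : ℕ) :
    P.map (fun ω => ∑ i ∈ Finset.range m, X i ω) = gaussianReal 0 (m * v) := by
  induction m with
  | zero => simp [gaussianReal_zero_var]
  | succ m ih =>
    have hsum : (fun ω => ∑ i ∈ Finset.range (m + 1), X i ω)
        = (fun ω => ∑ i ∈ Finset.range m, X i ω) + X m := by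
      ext ω; simp [Finset.sum_range_succ]
    have hind : IndepFun (fun ω => ∑ i ∈ Finset.range m, X i ω) (X m) P := by
      simpa [← Finset.sum_apply] using hindep.indepFun_sum_range_succ hmeas m
    rw [hsum, gaussianReal_add_gaussianReal_of_indepFun hind ih (hlaw m)]
    congr 1 <;> push_cast <;> ring

lemma iIndepFun.indepFun_finsetSum_finsetSum {ι β : Type*} [AddCommMonoid β] [MeasurableSpace β]
    [MeasurableAdd₂ β] {f : ι → Ω → β} (hindep : iIndepFun f P) (hmeas : ∀ i, Measurable (f i))
    {S T : Finset ι} (hST : Disjoint S T) :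
    IndepFun (fun ω => ∑ i ∈ S, f i ω) (fun ω => ∑ i ∈ T, f i ω) P := by
  have h := (hindep.indepFun_finset S T hST hmeas).comp
    (Finset.measurable_sum (f := fun (i : S) (v : S → β) => v i) Finset.univ
      fun i _ => measurable_pi_apply i)
    (Finset.measurable_sum (f := fun (i : T) (v : T → β) => v i) Finset.univ
      fun i _ => measurable_pi_apply i)
  convert h using 1 <;> ext ω <;> simp only [Function.comp_apply] <;>
    exact (Finset.sum_attach _ fun i => f i ω).symm

end ProbabilityTheory

section SumOfSquares

variable {X Y : Ω → ℝ} {v : ℝ≥0}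

lemma lintegral_exp_mul_sq_add_sq (hX : Measurable X) (hY : Measurable Y)
    (hXY : IndepFun X Y P) (hXlaw : P.map X = gaussianReal 0 v)
    (hYlaw : P.map Y = gaussianReal 0 v) {a : ℝ} (h : 2 * a * v < 1) :
    ∫⁻ ω, ENNReal.ofReal (rexp (a * (X ω ^ 2 + Y ω ^ 2))) ∂P =
      ENNReal.ofReal (1 - 2 * a * v)⁻¹ := by
  set g : ℝ → ℝ≥0∞ := fun x => ENNReal.ofReal (rexp (a * x ^ 2))
  have hg : Measurable g := by fun_prop
  have hsplit : ∀ ω, ENNReal.ofReal (rexp (a * (X ω ^ 2 + Y ω ^ 2))) = g (X ω) * g (Y ω) :=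
    fun ω => by rw [mul_add, Real.exp_add, ENNReal.ofReal_mul (exp_nonneg _)]
  simp_rw [hsplit]
  rw [lintegral_mul_eq_lintegral_mul_lintegral_of_indepFun'' (f := fun ω => g (X ω))
      (g := fun ω => g (Y ω)) (hg.comp hX).aemeasurable (hg.comp hY).aemeasurable
      (hXY.comp hg hg), ← lintegral_map hg hX, ← lintegral_map hg hY, hXlaw, hYlaw,
    lintegral_exp_mul_sq_gaussianReal v h, ← ENNReal.ofReal_mul (by positivity), ← mul_inv,
    Real.mul_self_sqrt (by linarith)]

lemma measure_le_sq_add_sq_le (hX : Measurable X) (hY : Measurable Y) (hXY : IndepFun X Y P)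
    (hXlaw : P.map X = gaussianReal 0 v) (hYlaw : P.map Y = gaussianReal 0 v)
    {a : ℝ} (ha : 0 ≤ a) (h : 2 * a * v < 1) (r : ℝ) :
    P {ω | r ≤ X ω ^ 2 + Y ω ^ 2} ≤ ENNReal.ofReal ((1 - 2 * a * v)⁻¹ * rexp (-(a * r))) := by
  have hmarkov := mul_meas_ge_le_lintegral₀ (μ := P)
    (by fun_prop : Measurable fun ω => ENNReal.ofReal (rexp (a * (X ω ^ 2 + Y ω ^ 2)))).aemeasurable
    (ENNReal.ofReal (rexp (a * r)))
  rw [lintegral_exp_mul_sq_add_sq hX hY hXY hXlaw hYlaw h] at hmarkov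
  have hsub : {ω | r ≤ X ω ^ 2 + Y ω ^ 2} ⊆ {ω | ENNReal.ofReal (rexp (a * r)) ≤
      ENNReal.ofReal (rexp (a * (X ω ^ 2 + Y ω ^ 2)))} := fun ω hω =>
    ENNReal.ofReal_le_ofReal (exp_le_exp.2 (mul_le_mul_of_nonneg_left hω ha))
  calc P {ω | r ≤ X ω ^ 2 + Y ω ^ 2}
      ≤ ENNReal.ofReal (1 - 2 * a * v)⁻¹ / ENNReal.ofReal (rexp (a * r)) := by
        rw [ENNReal.le_div_iff_mul_le (by simp [exp_pos]) (by simp), mul_comm]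
        exact (mul_le_mul_right (measure_mono hsub) _).trans hmarkov
    _ = ENNReal.ofReal ((1 - 2 * a * v)⁻¹ * rexp (-(a * r))) := by
        rw [← ENNReal.ofReal_div_of_pos (exp_pos _), div_eq_mul_inv, ← Real.exp_neg]

lemma measure_mul_log_lt_sq_add_sq_div_two_le (hX : Measurable X) (hY : Measurable Y)
    (hXY : IndepFun X Y P) (hXlaw : P.map X = gaussianReal 0 v)
    (hYlaw : P.map Y = gaussianReal 0 v) {α β : ℝ} (hβ : 0 ≤ β) (hβα : β < α) (hv : 0 < v) :
    P {ω | α * v * log v < (X ω ^ 2 + Y ω ^ 2) / 2} ≤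
      ENNReal.ofReal ((1 - β / α)⁻¹ * (v : ℝ) ^ (-β)) := by
  have hα : 0 < α := hβ.trans_lt hβα
  have hv' : (0 : ℝ) < v := hv
  have h := measure_le_sq_add_sq_le hX hY hXY hXlaw hYlaw (a := β / (2 * α * v)) (by positivity)
    (by rw [show 2 * (β / (2 * α * v)) * v = β / α by field_simp]; exact (div_lt_one hα).2 hβα)
    (2 * α * v * log v)
  rw [show 2 * (β / (2 * α * v)) * v = β / α by field_simp,
    show -(β / (2 * α * v) * (2 * α * v * log v)) = log v * -β by field_simp,
    ← Real.rpow_def_of_pos hv'] at h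
  refine (measure_mono fun ω hω => ?_).trans h
  have hω : α * v * log v < (X ω ^ 2 + Y ω ^ 2) / 2 := hω
  show 2 * α * v * log v ≤ X ω ^ 2 + Y ω ^ 2
  linarith

end SumOfSquares

lemma measure_barrier_crossing_le [IsProbabilityMeasure P] {η : ℕ × Fin 2 → Ω → ℝ}
    (hmeas : ∀ i, Measurable (η i)) (hindep : iIndepFun η P)
    (hgauss : ∀ i, P.map (η i) = gaussianReal 0 1) {α β : ℝ} (hβ : 0 ≤ β) (hβα : β < α)
    (j : ℕ) :
    P {ω | α * j * log j < ((∑ i ∈ Finset.range j, η (i, 0) ω) ^ 2 +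
        (∑ i ∈ Finset.range j, η (i, 1) ω) ^ 2) / 2} ≤
      ENNReal.ofReal ((1 - β / α)⁻¹ * (j : ℝ) ^ (-β)) := by
  rcases Nat.eq_zero_or_pos j with rfl | hj
  · simp
  have hSmeas (b : Fin 2) : Measurable fun ω => ∑ i ∈ Finset.range j, η (i, b) ω :=
    Finset.measurable_fun_sum _ fun i _ => hmeas (i, b)
  have hSlaw (b : Fin 2) :
      P.map (fun ω => ∑ i ∈ Finset.range j, η (i, b) ω) = gaussianReal 0 j := by
    simpa using iIndepFun.map_sum_range_eq_gaussianReal (fun i => hmeas (i, b))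
      (hindep.precomp (Prod.mk_left_injective b)) (fun i => hgauss (i, b)) j
  have hSindep : IndepFun (fun ω => ∑ i ∈ Finset.range j, η (i, 0) ω)
      (fun ω => ∑ i ∈ Finset.range j, η (i, 1) ω) P := by
    simpa using hindep.indepFun_finsetSum_finsetSum hmeas
      (S := (Finset.range j).map ⟨fun i => (i, 0), Prod.mk_left_injective 0⟩)
      (T := (Finset.range j).map ⟨fun i => (i, 1), Prod.mk_left_injective 1⟩)
      (by simp [Finset.disjoint_left])
  simpa using measure_mul_log_lt_sq_add_sq_div_two_le (hSmeas 0) (hSmeas 1) hSindep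
    (hSlaw 0) (hSlaw 1) hβ hβα (by simpa using hj)

lemma tendsto_measure_biUnion_Ici_zero_of_tsum_ne_top {s : ℕ → Set Ω}
    (hs : ∑' i, P (s i) ≠ ∞) : Tendsto (fun k => P (⋃ j ≥ k, s j)) atTop (𝓝 0) := by
  refine tendsto_of_tendsto_of_tendsto_of_le_of_le tendsto_const_nhds
    (ENNReal.tendsto_sum_nat_add _ hs) (fun _ => bot_le) fun k => ?_
  refine (measure_mono fun ω hω => ?_).trans (measure_iUnion_le fun i => s (i + k))
  obtain ⟨j, hjk, hj⟩ : ∃ j ≥ k, ω ∈ s j := by simpa using hω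
  exact Set.mem_iUnion.2 ⟨j - k, by rwa [Nat.sub_add_cancel hjk]⟩

/-- Lemma 5.2 (second part): for `T_j = |B_j|²/2` built from sums of i.i.d. standard
Gaussian vectors in `ℝ²`, the barrier `T_j ≤ α j log j` for `j = k,…,n` holds with
probability tending to one as `k → ∞`, uniformly in `n ≥ k`. -/
theorem stmt_13 (Ω : Type) [MeasurableSpace Ω] (P : Measure Ω) [IsProbabilityMeasure P]
    (η : ℕ × Fin 2 → Ω → ℝ) (hmeas : ∀ i, Measurable (η i))
    (hindep : iIndepFun η P)
    (hgauss : ∀ i, P.map (η i) = gaussianReal 0 1)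
    (α : ℝ) (hα : 1 < α) :
    ∀ ε : ℝ, 0 < ε → ∃ K : ℕ, ∀ k : ℕ, K ≤ k → ∀ n : ℕ, k ≤ n →
      1 - ε ≤ (P {ω | ∀ j : ℕ, k ≤ j → j ≤ n →
          ((∑ i ∈ Finset.range j, η (i, 0) ω) ^ 2 +
              (∑ i ∈ Finset.range j, η (i, 1) ω) ^ 2) / 2 ≤
            α * j * Real.log j}).toReal := by
  intro ε hε
  obtain ⟨β, hβ1, hβα⟩ := exists_between hα
  set bad : ℕ → Set Ω := fun j => {ω | α * j * log j <
    ((∑ i ∈ Finset.range j, η (i, 0) ω) ^ 2 + (∑ i ∈ Finset.range j, η (i, 1) ω) ^ 2) / 2}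
  have hsum : ∑' j, P (bad j) ≠ ∞ := by
    have hC : 0 < 1 - β / α := by rw [sub_pos, div_lt_one (by linarith)]; exact hβα
    have hsummable : Summable fun j : ℕ => (1 - β / α)⁻¹ * (j : ℝ) ^ (-β) :=
      (Real.summable_nat_rpow.2 (by linarith)).mul_left _
    have hcross := measure_barrier_crossing_le hmeas hindep hgauss (by linarith) hβα
    exact ne_top_of_le_ne_top ENNReal.ofReal_ne_top ((ENNReal.tsum_le_tsum hcross).trans_eq
      (ENNReal.ofReal_tsum_of_nonneg (fun j => by positivity) hsummable).symm)
  obtain ⟨K, hK⟩ := ENNReal.tendsto_atTop_zero.1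
    (tendsto_measure_biUnion_Ici_zero_of_tsum_ne_top hsum) (ENNReal.ofReal ε) (by simpa)
  refine ⟨K, fun k hk n _ => ?_⟩
  have hgood : (⋃ j ≥ k, bad j)ᶜ ⊆ {ω | ∀ j : ℕ, k ≤ j → j ≤ n →
      ((∑ i ∈ Finset.range j, η (i, 0) ω) ^ 2 +
        (∑ i ∈ Finset.range j, η (i, 1) ω) ^ 2) / 2 ≤ α * j * Real.log j} := by
    intro ω hω j hjk _
    have hω : ω ∉ bad j := fun h => hω (Set.mem_iUnion₂.2 ⟨j, hjk, h⟩)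
    simpa [bad] using hω
  have hbadU : MeasurableSet (⋃ j ≥ k, bad j) :=
    .iUnion fun j => .iUnion fun _ => measurableSet_lt measurable_const (by fun_prop)
  calc 1 - ε ≤ (P (⋃ j ≥ k, bad j)ᶜ).toReal := by
        rw [prob_compl_eq_one_sub hbadU, ENNReal.toReal_sub_of_le prob_le_one ENNReal.one_ne_top,
          ENNReal.toReal_one]
        linarith [ENNReal.toReal_le_of_le_ofReal hε.le (hK k hk)]
    _ ≤ _ := ENNReal.toReal_mono (measure_ne_top _ _) (measure_mono hgood)
end

section
/- Fix ε ∈ (0,1/2). There exists c > 0 such that for all integers n, k ≥ 1 with k/n < ε/2 and every real u > 0, the discrete Gaussian bridge X from 0 to u over n steps satisfies P( there exists j ∈ {1,…,k} with X_{n−j} ∉ [(1−ε)u, (1+ε)u] ) ≤ c·k·e^{−ε²u²/(4k)}. -/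
/-! At time `m` the bridge deviates from its mean `r + (m/n)(u − r)` by
`∑_{i<n} (𝟙{i<m} − m/n) ξ_i`, a combination of independent `N(0, 1/2)` variables, hence
sub-Gaussian with variance proxy `m(n − m)/(2n)`, at most `k/2` when `m = n − j`, `j ≤ k`.
The mean at time `n − j` lies within `εu/2` of `u` because `j/n < ε/2`, so leaving
`[(1−ε)u, (1+ε)u]` forces a deviation of at least `εu/2`, which by the Chernoff bound has
probability at most `2 e^{−ε²u²/(4k)}`. A union bound over `j` gives `c = 2`. -/

open MeasureTheory ProbabilityTheory

noncomputable section

variable {Ω : Type} [MeasurableSpace Ω]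

/-- Partial sums `W_j = ξ_1 + ⋯ + ξ_j` of the increments `ξ`. -/
def pSum (ξ : ℕ → Ω → ℝ) (j : ℕ) (ω : Ω) : ℝ := ∑ i ∈ Finset.range j, ξ i ω

/-- The discrete Gaussian bridge from `r` to `u` over `k` steps, evaluated at time `j`:
`X_j = r + (j/k)(u − r) + W_j − (j/k) W_k`. -/
def bridge (ξ : ℕ → Ω → ℝ) (k : ℕ) (r u : ℝ) (j : ℕ) (ω : Ω) : ℝ :=
  r + ((j : ℝ) / k) * (u - r) + pSum ξ j ω - ((j : ℝ) / k) * pSum ξ k ω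

/-- `ξ` is an i.i.d. family of centered Gaussian random variables of variance `1/2`. -/
def iidGauss {ι : Type} (P : Measure Ω) (ξ : ι → Ω → ℝ) : Prop :=
  (∀ i, Measurable (ξ i)) ∧ iIndepFun ξ P ∧
    ∀ i, P.map (ξ i) = gaussianReal 0 (1 / 2)

open Real Finset
open scoped NNReal

lemma ProbabilityTheory.HasSubgaussianMGF.mono {X : Ω → ℝ} {μ : Measure Ω} {c c' : ℝ≥0}
    (h : HasSubgaussianMGF X c μ) (hc : c ≤ c') : HasSubgaussianMGF X c' μ :=
  ⟨h.integrable_exp_mul, fun t ↦ (h.mgf_le t).trans (exp_le_exp.2 (by gcongr))⟩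

lemma ProbabilityTheory.HasSubgaussianMGF.measureReal_abs_ge_le {X : Ω → ℝ} {μ : Measure Ω}
    {c : ℝ≥0} (h : HasSubgaussianMGF X c μ) {s : ℝ} (hs : 0 ≤ s) :
    μ.real {ω | s ≤ |X ω|} ≤ 2 * exp (-s ^ 2 / (2 * c)) := by
  have hsplit : {ω | s ≤ |X ω|} = {ω | s ≤ X ω} ∪ {ω | s ≤ (-X) ω} := by
    ext ω; simp [le_abs', le_neg, or_comm]
  rw [hsplit, two_mul]
  exact (measureReal_union_le _ _).trans
    (add_le_add (h.measure_ge_le hs) (h.neg.measure_ge_le hs))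

lemma ProbabilityTheory.hasSubgaussianMGF_of_map_eq_gaussianReal {X : Ω → ℝ} {μ : Measure Ω}
    {v : ℝ≥0} (hX : AEMeasurable X μ) (h : μ.map X = gaussianReal 0 v) :
    HasSubgaussianMGF X v μ := by
  rw [← HasSubgaussianMGF.id_map_iff hX, h]
  exact ⟨integrable_exp_mul_gaussianReal, fun t ↦ by simp [mgf_id_gaussianReal]⟩

lemma Finset.range_filter_lt_of_le {m n : ℕ} (hmn : m ≤ n) :
    (range n).filter (· < m) = range m := by
  ext i; simp only [mem_filter, mem_range]; omega

def bridgeCoeff (n m i : ℕ) : ℝ := (if i < m then 1 else 0) - (m : ℝ) / n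

omit [MeasurableSpace Ω] in
lemma bridge_sub_eq_sum (ξ : ℕ → Ω → ℝ) {m n : ℕ} (hmn : m ≤ n) (r u : ℝ) (ω : Ω) :
    bridge ξ n r u m ω - (r + (m : ℝ) / n * (u - r)) =
      ∑ i ∈ range n, bridgeCoeff n m i * ξ i ω := by
  simp only [bridge, pSum, bridgeCoeff, sub_mul, sum_sub_distrib, ite_mul, one_mul, zero_mul,
    sum_ite, ← mul_sum, sum_const_zero, add_zero]
  rw [range_filter_lt_of_le hmn]
  ring

lemma sum_sq_bridgeCoeff {m n : ℕ} (hmn : m ≤ n) :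
    ∑ i ∈ range n, bridgeCoeff n m i ^ 2 = m * (n - m) / n := by
  rcases Nat.eq_zero_or_pos n with rfl | hn
  · simp [Nat.le_zero.1 hmn]
  have hsq : ∀ i, bridgeCoeff n m i ^ 2
      = (if i < m then 1 - 2 * ((m : ℝ) / n) else 0) + ((m : ℝ) / n) ^ 2 := by
    intro i; unfold bridgeCoeff; split_ifs <;> ring
  simp only [hsq, sum_add_distrib, sum_ite, sum_const_zero, add_zero, sum_const, card_range,
    range_filter_lt_of_le hmn, nsmul_eq_mul]
  field_simp
  ring

lemma hasSubgaussianMGF_bridge_sub {P : Measure Ω} {ξ : ℕ → Ω → ℝ} (hξ : iidGauss P ξ)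
    {m n : ℕ} (hmn : m ≤ n) (r u : ℝ) :
    HasSubgaussianMGF (fun ω ↦ bridge ξ n r u m ω - (r + (m : ℝ) / n * (u - r)))
      (Real.toNNReal (m * (n - m) / (2 * n))) P := by
  obtain ⟨hmeas, hindep, hmap⟩ := hξ
  have hterm : ∀ i ∈ range n, HasSubgaussianMGF (fun ω ↦ bridgeCoeff n m i * ξ i ω)
      (Real.toNNReal (bridgeCoeff n m i ^ 2 / 2)) P := fun i _ ↦ by
    convert (hasSubgaussianMGF_of_map_eq_gaussianReal (hmeas i).aemeasurable
      (hmap i)).const_mul (bridgeCoeff n m i) using 1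
    apply NNReal.eq
    rw [Real.coe_toNNReal _ (by positivity)]
    change _ = bridgeCoeff n m i ^ 2 * ((1 / 2 : ℝ≥0) : ℝ)
    norm_num [div_eq_mul_inv]
  have hsum := HasSubgaussianMGF.sum_of_iIndepFun
    (hindep.comp (fun i x ↦ bridgeCoeff n m i * x) fun i ↦ measurable_const_mul _) hterm
  refine (hsum.congr (ae_of_all _ fun ω ↦ (bridge_sub_eq_sum ξ hmn r u ω).symm)).mono
    (le_of_eq ?_)
  have hmn' : (m : ℝ) ≤ n := by exact_mod_cast hmn
  apply NNReal.eq
  rw [Real.coe_toNNReal _ (by positivity), NNReal.coe_sum]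
  simp only [Real.coe_toNNReal _ (div_nonneg (sq_nonneg _) zero_le_two)]
  rw [← sum_div, sum_sq_bridgeCoeff hmn]
  ring

lemma measureReal_bridge_outside_le {P : Measure Ω} [IsFiniteMeasure P] {ξ : ℕ → Ω → ℝ}
    (hξ : iidGauss P ξ) {ε u : ℝ} (hε : 0 < ε) (hu : 0 < u) {n k j : ℕ} (hn : 1 ≤ n)
    (hjk : j ≤ k) (hkn : (k : ℝ) / n < ε / 2) :
    P.real {ω | bridge ξ n 0 u (n - j) ω < (1 - ε) * u ∨
        (1 + ε) * u < bridge ξ n 0 u (n - j) ω} ≤ 2 * exp (-(ε ^ 2 * u ^ 2 / (4 * k))) := by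
  set m := n - j
  have hn0 : (0 : ℝ) < n := by exact_mod_cast hn
  have hmn : (m : ℝ) ≤ n := by exact_mod_cast Nat.sub_le n j
  have hnm : (n : ℝ) - m ≤ k := by
    rw [← Nat.cast_sub (Nat.sub_le n j)]
    exact_mod_cast (by omega : n - m ≤ k)
  have hdrift_nonneg : 0 ≤ u - m / n * u := by
    nlinarith [div_le_one_of_le₀ hmn hn0.le]
  have hdrift_lt : u - m / n * u < ε * u / 2 := by
    have : u - m / n * u = (n - m) / n * u := by field_simp
    rw [this]
    calc (n - m) / n * u ≤ k / n * u := by gcongr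
      _ < ε / 2 * u := by gcongr
      _ = ε * u / 2 := by ring
  have hsub : {ω | bridge ξ n 0 u m ω < (1 - ε) * u ∨ (1 + ε) * u < bridge ξ n 0 u m ω} ⊆
      {ω | ε * u / 2 ≤ |bridge ξ n 0 u m ω - (0 + m / n * (u - 0))|} := by
    intro ω hω
    simp only [Set.mem_ofPred_eq, zero_add, sub_zero] at hω ⊢
    rcases hω with h | h
    · rw [abs_sub_comm, le_abs]; left; linarith
    · rw [le_abs]; left; linarith
  have hparam : Real.toNNReal (m * (n - m) / (2 * n)) ≤ (k : ℝ≥0) / 2 := by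
    rw [Real.toNNReal_le_iff_le_coe]
    push_cast
    rw [div_le_div_iff₀ (by positivity) two_pos]
    nlinarith [div_le_one_of_le₀ hmn hn0.le]
  calc _ ≤ _ := measureReal_mono hsub
    _ ≤ 2 * exp (-(ε * u / 2) ^ 2 / (2 * ((k : ℝ≥0) / 2 : ℝ≥0))) :=
      ((hasSubgaussianMGF_bridge_sub hξ (Nat.sub_le n j) 0 u).mono hparam).measureReal_abs_ge_le
        (by positivity)
    _ = 2 * exp (-(ε ^ 2 * u ^ 2 / (4 * k))) := by
      push_cast
      ring_nf

theorem stmt_16_general (P : Measure Ω) [IsProbabilityMeasure P]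
    (ξ : ℕ → Ω → ℝ) (hξ : iidGauss P ξ)
    (ε : ℝ) (hε0 : 0 < ε) :
    ∃ c : ℝ, 0 < c ∧
      ∀ n k : ℕ, 1 ≤ n → 1 ≤ k → (k : ℝ) / n < ε / 2 → ∀ u : ℝ, 0 < u →
        (P {ω | ∃ j, 1 ≤ j ∧ j ≤ k ∧
            (bridge ξ n 0 u (n - j) ω < (1 - ε) * u ∨
              (1 + ε) * u < bridge ξ n 0 u (n - j) ω)}).toReal ≤
          c * k * Real.exp (-(ε ^ 2 * u ^ 2 / (4 * k))) := by
  refine ⟨2, two_pos, fun n k hn _ hkn u hu ↦ ?_⟩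
  set E : ℕ → Set Ω := fun j ↦ {ω | bridge ξ n 0 u (n - j) ω < (1 - ε) * u ∨
    (1 + ε) * u < bridge ξ n 0 u (n - j) ω}
  have hunion : {ω | ∃ j, 1 ≤ j ∧ j ≤ k ∧ ω ∈ E j} ⊆ ⋃ j ∈ Icc 1 k, E j := by
    rintro ω ⟨j, hj1, hjk, hω⟩
    exact Set.mem_biUnion (mem_Icc.2 ⟨hj1, hjk⟩) hω
  calc P.real {ω | ∃ j, 1 ≤ j ∧ j ≤ k ∧ ω ∈ E j}
      ≤ ∑ j ∈ Icc 1 k, P.real (E j) :=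
        (measureReal_mono hunion (measure_ne_top P _)).trans (measureReal_biUnion_finset_le _ _)
    _ ≤ ∑ _j ∈ Icc 1 k, 2 * exp (-(ε ^ 2 * u ^ 2 / (4 * k))) :=
        sum_le_sum fun j hj ↦ measureReal_bridge_outside_le hξ hε0 hu hn (mem_Icc.1 hj).2 hkn
    _ = 2 * k * exp (-(ε ^ 2 * u ^ 2 / (4 * k))) := by
        rw [sum_const, Nat.card_Icc, nsmul_eq_mul]
        push_cast
        ring

/-- Near its endpoint, the bridge from `0` to `u` stays within `[(1−ε)u, (1+ε)u]`
with Gaussian-type failure probability. -/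
theorem stmt_16 (P : Measure Ω) [IsProbabilityMeasure P]
    (ξ : ℕ → Ω → ℝ) (hξ : iidGauss P ξ)
    (ε : ℝ) (hε0 : 0 < ε) (hε1 : ε < 1 / 2) :
    ∃ c : ℝ, 0 < c ∧
      ∀ n k : ℕ, 1 ≤ n → 1 ≤ k → (k : ℝ) / n < ε / 2 → ∀ u : ℝ, 0 < u →
        (P {ω | ∃ j, 1 ≤ j ∧ j ≤ k ∧
            (bridge ξ n 0 u (n - j) ω < (1 - ε) * u ∨
              (1 + ε) * u < bridge ξ n 0 u (n - j) ω)}).toReal ≤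
          c * k * Real.exp (-(ε ^ 2 * u ^ 2 / (4 * k))) :=
  stmt_16_general P ξ hξ ε hε0
end
end
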